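/- Every simple transparent object of M(X) lies in the essential image of the functor F : G(X)-Rep → M(X); consequently F is an equivalence between G(X)-Rep and the full subcategory of transparent objects of M(X). -/

import Mathlib

/-- A crossed module: groups `X₁`, `X₂`, a right action of `X₁` on `X₂` by group
automorphisms (written `act m g` for `m^g`), and a boundary homomorphism
`δ : X₂ →* X₁` satisfying equivariance and the Peiffer identity. -/
structure CrossedModule (X₁ X₂ : Type) [Group X₁] [Group X₂] where
  act : X₂ → X₁ → X₂
  act_one : ∀ m : X₂, act m 1 = m
  act_mul : ∀ (m : X₂) (g h : X₁), act m (g * h) = act (act m g) h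
  act_hom : ∀ (m n : X₂) (g : X₁), act (m * n) g = act m g * act n g
  δ : X₂ →* X₁
  equivariance : ∀ (m : X₂) (g : X₁), δ (act m g) = g⁻¹ * δ m * g
  peiffer : ∀ m n : X₂, act m (δ n) = n⁻¹ * m * n

section Representations
open TensorProduct

variable {F : Type} [Field F] {X₁ X₂ : Type} [Group X₁] [Group X₂] [Fintype X₁] [Fintype X₂] [DecidableEq X₂]

/-- A representation of the crossed module `X` on the `F`-vector space `V`:
an `X₂`-grading, encoded by the family of projections `P m` onto the graded
components, together with an `X₁`-action `Q` such that `P(m)Q(g) = Q(g)P(m^g)`.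
These are the objects of the category `M(X)`. -/
structure XRep (F : Type) [Field F] {X₁ X₂ : Type} [Group X₁] [Group X₂] [Fintype X₂] [DecidableEq X₂]
    (X : CrossedModule X₁ X₂)
    (V : Type) [AddCommGroup V] [Module F V] where
  P : X₂ → (V →ₗ[F] V)
  Q : X₁ → (V →ₗ[F] V)
  P_orth : ∀ m n : X₂, (P m) ∘ₗ (P n) = if m = n then P m else 0
  P_total : (∑ m : X₂, P m) = LinearMap.id
  Q_one : Q 1 = LinearMap.id
  Q_mul : ∀ g h : X₁, Q (g * h) = Q g ∘ₗ Q h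
  PQ_compat : ∀ (m : X₂) (g : X₁), (P m) ∘ₗ (Q g) = (Q g) ∘ₗ (P (X.act m g))

variable {X : CrossedModule X₁ X₂}
variable {U V W U' V' W' : Type}
  [AddCommGroup U] [Module F U] [AddCommGroup V] [Module F V] [AddCommGroup W] [Module F W]
  [AddCommGroup U'] [Module F U'] [AddCommGroup V'] [Module F V'] [AddCommGroup W'] [Module F W']

/-- The grading of the tensor product: `(V ⊗ W)_m = ⊕_{nl = m} V_n ⊗ W_l`. -/
noncomputable def tensorP (A : XRep F X V) (B : XRep F X W) (m : X₂) :
    (V ⊗[F] W) →ₗ[F] (V ⊗[F] W) :=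
  ∑ n : X₂, TensorProduct.map (A.P n) (B.P (n⁻¹ * m))

/-- The diagonal `X₁`-action on the tensor product. -/
noncomputable def tensorQ (A : XRep F X V) (B : XRep F X W) (g : X₁) :
    (V ⊗[F] W) →ₗ[F] (V ⊗[F] W) :=
  TensorProduct.map (A.Q g) (B.Q g)

/-- The braiding `R_{V,W}(v ⊗ w) = ∑_{m ∈ X₂} Q_W(∂m) w ⊗ P_V(m) v`, written in terms
of the grading data `PA` on `V` and the action data `QB` on `W`. -/
noncomputable def braidAux (X : CrossedModule X₁ X₂)
    (PA : X₂ → (V →ₗ[F] V)) (QB : X₁ → (W →ₗ[F] W)) :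
    (V ⊗[F] W) →ₗ[F] (W ⊗[F] V) :=
  ∑ m : X₂, (TensorProduct.map (QB (X.δ m)) (PA m)) ∘ₗ
    (TensorProduct.comm F V W).toLinearMap

/-- The braiding `R_{V,W}` between two crossed-module representations. -/
noncomputable def braid (A : XRep F X V) (B : XRep F X W) :
    (V ⊗[F] W) →ₗ[F] (W ⊗[F] V) :=
  braidAux X A.P B.Q

/-- Morphisms in `M(X)`: linear maps compatible with the grading and the action. -/
def IsXRepHom (A : XRep F X V) (B : XRep F X W) (f : V →ₗ[F] W) : Prop :=
  (∀ m : X₂, f ∘ₗ A.P m = B.P m ∘ₗ f) ∧ (∀ g : X₁, f ∘ₗ A.Q g = B.Q g ∘ₗ f)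

end Representations

section Vacuum

variable (F : Type) [Field F] {X₁ X₂ : Type} [Group X₁] [Group X₂]
  [Fintype X₁] [Fintype X₂] [DecidableEq X₂]
  (X : CrossedModule X₁ X₂) [X.δ.range.Normal]

/-- The underlying vector space `k[ker ∂] ⊗ k(coker ∂)` of the vacuum object,
realized as the space of `F`-valued functions on `(ker ∂) × (coker ∂)`;
the basis vector `x ⊗ δ_{Iy}` corresponds to the indicator function of `(x, Iy)`. -/
abbrev VacuumCarrier : Type := (X.δ.ker × (X₁ ⧸ X.δ.range)) → F

/-- The grading projections of the vacuum object,
`P(m)(x ⊗ δ_{Iy}) = δ(m^y, x) (x ⊗ δ_{Iy})`, defined via a choice of coset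
representative. -/
noncomputable def vacuumP (m : X₂) : VacuumCarrier F X →ₗ[F] VacuumCarrier F X where
  toFun f := fun p => if X.act m (Quotient.out p.2) = (p.1 : X₂) then f p else 0
  map_add' f g := by funext p; by_cases h : X.act m (Quotient.out p.2) = (p.1 : X₂) <;> simp [h]
  map_smul' c f := by funext p; by_cases h : X.act m (Quotient.out p.2) = (p.1 : X₂) <;> simp [h]

/-- The `X₁`-action of the vacuum object, `Q(g)(x ⊗ δ_{Iy}) = x ⊗ δ_{Igy}`. -/
def vacuumQ (g : X₁) : VacuumCarrier F X →ₗ[F] VacuumCarrier F X where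
  toFun f := fun p => f (p.1, (QuotientGroup.mk g)⁻¹ * p.2)
  map_add' f g := by funext p; simp
  map_smul' c f := by funext p; simp

end Vacuum

section Simple

variable {F : Type} [Field F] {X₁ X₂ : Type} [Group X₁] [Group X₂]
  [Fintype X₁] [Fintype X₂] [DecidableEq X₂] {X : CrossedModule X₁ X₂}
  {V : Type} [AddCommGroup V] [Module F V]

/-- A representation of a crossed module is simple if it is nonzero and has no
nontrivial invariant subspace. -/
def XRep.IsSimple (A : XRep F X V) : Prop :=
  Nontrivial V ∧
  ∀ S : Submodule F V,
    (∀ m : X₂, S.map (A.P m) ≤ S) → (∀ g : X₁, S.map (A.Q g) ≤ S) →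
    S = ⊥ ∨ S = ⊤

/-- `A` is a direct summand (retract) of the vacuum object `V_K`. -/
def IsVacuumSummand [X.δ.range.Normal] (A : XRep F X V) : Prop :=
  ∃ (ι : V →ₗ[F] VacuumCarrier F X) (π : VacuumCarrier F X →ₗ[F] V),
    (∀ m : X₂, ι ∘ₗ A.P m = vacuumP F X m ∘ₗ ι) ∧
    (∀ g : X₁, ι ∘ₗ A.Q g = vacuumQ F X g ∘ₗ ι) ∧
    (∀ m : X₂, π ∘ₗ vacuumP F X m = A.P m ∘ₗ π) ∧
    (∀ g : X₁, π ∘ₗ vacuumQ F X g = A.Q g ∘ₗ π) ∧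
    π ∘ₗ ι = LinearMap.id

end Simple

section Transparent

variable {F : Type} [Field F] {X₁ X₂ : Type} [Group X₁] [Group X₂]
  [Fintype X₁] [Fintype X₂] [DecidableEq X₂] {X : CrossedModule X₁ X₂}

/-- A representation is transparent if its double braiding with every object of
`M(X)` is the identity. -/
def XRep.Transparent {W : Type} [AddCommGroup W] [Module F W] (B : XRep F X W) : Prop :=
  ∀ (V : Type) (_ : AddCommGroup V) (_ : Module F V) (A : XRep F X V),
    braidAux X B.P A.Q ∘ₗ braidAux X A.P B.Q = LinearMap.id ∧
    braidAux X A.P B.Q ∘ₗ braidAux X B.P A.Q = LinearMap.id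

/-- Two crossed-module representations are isomorphic. -/
def XRepIso {V W : Type} [AddCommGroup V] [Module F V] [AddCommGroup W] [Module F W]
    (A : XRep F X V) (B : XRep F X W) : Prop :=
  ∃ f : V →ₗ[F] W, Function.Bijective f ∧ IsXRepHom A B f

end Transparent

section GX

variable {X₁ X₂ : Type} [Group X₁] [Group X₂]

lemma CrossedModule.one_act (X : CrossedModule X₁ X₂) (g : X₁) : X.act 1 g = 1 := by
  have h := X.act_hom 1 1 g
  rw [mul_one] at h
  exact mul_left_cancel (a := X.act 1 g) (by rw [mul_one]; exact h.symm)

/-- The action of `X₁` on `X₂` preserves `ker ∂`, giving an action on the kernel. -/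
def CrossedModule.kerAct (X : CrossedModule X₁ X₂) (k : X.δ.ker) (g : X₁) : X.δ.ker :=
  ⟨X.act (k : X₂) g, by
    have hk : X.δ (k : X₂) = 1 := k.2
    simp [MonoidHom.mem_ker, X.equivariance, hk]⟩

lemma CrossedModule.kerAct_one (X : CrossedModule X₁ X₂) (g : X₁) :
    X.kerAct 1 g = 1 := by
  apply Subtype.ext
  show X.act ((1 : X.δ.ker) : X₂) g = ((1 : X.δ.ker) : X₂)
  simpa using X.one_act g

lemma CrossedModule.kerAct_mul (X : CrossedModule X₁ X₂) (k k' : X.δ.ker) (g : X₁) :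
    X.kerAct (k * k') g = X.kerAct k g * X.kerAct k' g := by
  apply Subtype.ext
  simpa [CrossedModule.kerAct] using X.act_hom (k : X₂) (k' : X₂) g

variable (F : Type) [Field F] (X : CrossedModule X₁ X₂) [X.δ.range.Normal]

/-- The character group `(ker ∂)* = Hom(ker ∂, F^×)` of the abelian group `ker ∂`. -/
abbrev KChar : Type := X.δ.ker →* Fˣ

/-- The cokernel `coker ∂ = X₁ / Im ∂`. -/
abbrev Coker : Type := X₁ ⧸ X.δ.range

/-- The dual action `μ̂` of `coker ∂` on `(ker ∂)*`: `(χ^c)(k) = χ(k^{c⁻¹})`,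
computed via a coset representative. -/
noncomputable def dualActQ (c : Coker X) (χ : KChar F X) : KChar F X where
  toFun k := χ (X.kerAct k (Quotient.out c)⁻¹)
  map_one' := by try simp only []
                 rw [X.kerAct_one, map_one]
  map_mul' k k' := by try simp only []
                      rw [X.kerAct_mul, map_mul]

variable {V : Type} [AddCommGroup V] [Module F V]

/-- `ρ` is a representation of the group `G(X) = (ker ∂)* ⋊_{μ̂} (coker ∂)` on `V`
(with the semidirect product multiplication
`(χ, c) · (χ', c') = (χ^{c'} χ', c c')`). -/
def IsGRep (ρ : KChar F X × Coker X → (V →ₗ[F] V)) : Prop :=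
  ρ (1, 1) = LinearMap.id ∧
  ∀ (χ χ' : KChar F X) (c c' : Coker X),
    ρ (dualActQ F X c' χ * χ', c * c') = ρ (χ, c) ∘ₗ ρ (χ', c')

variable [Fintype X₂] [DecidableEq X₂]
open Classical in

/-- The grading part of the functor `F : G(X)-Rep → M(X)`:
`P^ρ(m) = (1/|K|) ∑_{χ ∈ K*} χ(m) ρ(χ, I)` for `m ∈ K = ker ∂`, and `0` otherwise. -/
noncomputable def FobP (ρ : KChar F X × Coker X → (V →ₗ[F] V)) (m : X₂) :
    V →ₗ[F] V :=
  if h : m ∈ X.δ.ker then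
    (Nat.card X.δ.ker : F)⁻¹ • ∑ᶠ χ : KChar F X, ((χ ⟨m, h⟩ : Fˣ) : F) • ρ (χ, 1)
  else 0

/-- The action part of the functor `F : G(X)-Rep → M(X)`: `Q^ρ(g) = ρ(1, Ig)`. -/
def FobQ (ρ : KChar F X × Coker X → (V →ₗ[F] V)) (g : X₁) : V →ₗ[F] V :=
  ρ (1, QuotientGroup.mk g)

end GX

/-!
Transparency of `B` against the regular `X₁`-module placed in degree `1` forces the grading of
`B` to be supported on `K = ker ∂`; transparency against the functions on `X₂` (graded by
evaluation points) then forces `Q(∂n) = 1`, so `Q` factors through `coker ∂`.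
A `K`-grading is the same as an action of the dual group `K*`, with `χ` acting on the
degree-`k` part by `χ(k)⁻¹`; together with `Q` this is the `G(X)`-representation `ρ`, and
Fourier inversion on `K` (whose characters separate points, `F` being algebraically closed of
characteristic zero) gives `F(ρ) = B`. Full faithfulness is Fourier inversion in the other
direction: `ρ(χ, I)` is a linear combination of the `P^ρ(k)`, and
`ρ(χ, c) = ρ(1, c) ρ(χ, I)`.
-/

open TensorProduct

namespace CrossedModule

variable {X₁ X₂ : Type} [Group X₁] [Group X₂] (X : CrossedModule X₁ X₂)

theorem act_injective (g : X₁) : Function.Injective (X.act · g) := fun m n h => by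
  simpa [← X.act_mul, X.act_one] using congrArg (X.act · g⁻¹) h

theorem act_eq_one_iff {m : X₂} {g : X₁} : X.act m g = 1 ↔ m = 1 :=
  (X.act_injective g).eq_iff' (X.one_act g)

theorem commute_of_mem_ker {m : X₂} (hm : m ∈ X.δ.ker) (x : X₂) : Commute m x := by
  have h := X.peiffer x m
  rw [MonoidHom.mem_ker.mp hm, X.act_one] at h
  unfold Commute SemiconjBy
  nth_rw 1 [h]
  group

instance isMulCommutative_ker : IsMulCommutative X.δ.ker :=
  ⟨⟨fun a b => Subtype.ext (X.commute_of_mem_ker a.2 b)⟩⟩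

theorem kerAct_kerAct (k : X.δ.ker) (g h : X₁) :
    X.kerAct (X.kerAct k g) h = X.kerAct k (g * h) :=
  Subtype.ext (X.act_mul k g h).symm

theorem kerAct_one_right (k : X.δ.ker) : X.kerAct k 1 = k :=
  Subtype.ext (X.act_one k)

theorem kerAct_bijective (g : X₁) : Function.Bijective (X.kerAct · g) :=
  Function.bijective_iff_has_inverse.mpr ⟨(X.kerAct · g⁻¹),
    fun k => by simp [kerAct_kerAct, kerAct_one_right],
    fun k => by simp [kerAct_kerAct, kerAct_one_right]⟩

end CrossedModule

section Characters

variable {K F : Type} [Field F]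

theorem sum_units_val_apply [Group K] [Fintype K] (ψ : K →* Fˣ) [Decidable (ψ = 1)] :
    ∑ k, (ψ k : F) = if ψ = 1 then (Fintype.card K : F) else 0 := by
  split_ifs with h
  · simp [h]
  · refine sum_hom_units_eq_zero ((Units.coeHom F).comp ψ) fun h' => h ?_
    ext k
    simpa using DFunLike.congr_fun h' k

variable [CommGroup K] [Finite K] [IsAlgClosed F] [CharZero F]

instance hasEnoughRootsOfUnity_exponent : HasEnoughRootsOfUnity F (Monoid.exponent K) :=
  have : NeZero (Monoid.exponent K : F) :=
    ⟨Nat.cast_ne_zero.mpr Monoid.exponent_ne_zero_of_finite⟩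
  inferInstance

instance finite_monoidHom_units : Finite (K →* Fˣ) :=
  Finite.of_equiv _ (CommGroup.monoidHom_mulEquiv_of_hasEnoughRootsOfUnity K F).some.toEquiv.symm

theorem sum_monoidHom_units_apply [Fintype K] [Fintype (K →* Fˣ)] (a : K) [Decidable (a = 1)] :
    ∑ χ : K →* Fˣ, (χ a : F) = if a = 1 then (Fintype.card K : F) else 0 := by
  classical
  have hcard : Fintype.card (K →* Fˣ) = Fintype.card K := by
    simpa [Nat.card_eq_fintype_card] using CommGroup.card_monoidHom_of_hasEnoughRootsOfUnity K F
  have heval : (MonoidHom.eval a : (K →* Fˣ) →* Fˣ) = 1 ↔ a = 1 := by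
    rw [← CommGroup.forall_apply_eq_apply_iff K (M := F) (g' := 1), DFunLike.ext_iff]
    simp
  simpa [heval, hcard] using sum_units_val_apply (MonoidHom.eval a : (K →* Fˣ) →* Fˣ)

end Characters

section Fourier

variable {K F M : Type} [Field F] [AddCommGroup M] [Module F M]

theorem sum_char_inv_smul_sum_char_apply_smul [Group K] [Fintype K] [Fintype (K →* Fˣ)]
    (S : (K →* Fˣ) → M) (χ : K →* Fˣ) :
    ∑ k, (χ k : F)⁻¹ • ∑ ψ : K →* Fˣ, (ψ k : F) • S ψ =
      (Fintype.card K : F) • S χ := by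
  classical
  calc ∑ k, (χ k : F)⁻¹ • ∑ ψ : K →* Fˣ, (ψ k : F) • S ψ
      = ∑ ψ : K →* Fˣ, (∑ k, ((χ⁻¹ * ψ) k : F)) • S ψ := by
        simp only [Finset.smul_sum, smul_smul, Finset.sum_smul]
        rw [Finset.sum_comm]
        simp
    _ = ∑ ψ : K →* Fˣ, (if χ⁻¹ * ψ = 1 then (Fintype.card K : F) else 0) • S ψ := by
        simp only [sum_units_val_apply]
    _ = (Fintype.card K : F) • S χ := by
        refine (Fintype.sum_eq_single χ fun ψ hψ => ?_).trans
          (by rw [if_pos (inv_mul_cancel χ)])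
        rw [if_neg (fun h => hψ (inv_mul_eq_one.mp h).symm), zero_smul]

variable [CommGroup K] [Finite K] [IsAlgClosed F] [CharZero F]

theorem sum_char_apply_smul_sum_char_inv_smul [Fintype K] [Fintype (K →* Fˣ)]
    (T : K → M) (a : K) :
    ∑ χ : K →* Fˣ, (χ a : F) • ∑ k, (χ k : F)⁻¹ • T k =
      (Fintype.card K : F) • T a := by
  classical
  calc ∑ χ : K →* Fˣ, (χ a : F) • ∑ k, (χ k : F)⁻¹ • T k
      = ∑ k, (∑ χ : K →* Fˣ, (χ (a * k⁻¹) : F)) • T k := by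
        simp only [Finset.smul_sum, smul_smul, Finset.sum_smul]
        rw [Finset.sum_comm]
        simp
    _ = ∑ k, (if a * k⁻¹ = 1 then (Fintype.card K : F) else 0) • T k := by
        simp only [sum_monoidHom_units_apply]
    _ = (Fintype.card K : F) • T a := by
        simp [mul_inv_eq_one]

end Fourier

section Functor

variable {F : Type} [Field F] {X₁ X₂ : Type} [Group X₁] [Group X₂]
  {X : CrossedModule X₁ X₂} {V V' : Type} [AddCommGroup V] [Module F V]
  [AddCommGroup V'] [Module F V']

theorem comp_sum_smul_eq_sum_smul_comp {ι : Type} (s : Finset ι) (a : ι → F)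
    {T : ι → V →ₗ[F] V} {T' : ι → V' →ₗ[F] V'} {f : V →ₗ[F] V'}
    (h : ∀ i, f ∘ₗ T i = T' i ∘ₗ f) :
    f ∘ₗ ∑ i ∈ s, a i • T i = (∑ i ∈ s, a i • T' i) ∘ₗ f := by
  ext v
  simp only [LinearMap.comp_apply, LinearMap.sum_apply, LinearMap.smul_apply, map_sum, map_smul]
  exact Finset.sum_congr rfl fun i _ => by rw [← LinearMap.comp_apply, h i, LinearMap.comp_apply]

theorem FobQ_out (ρ : KChar F X × Coker X → (V →ₗ[F] V)) (c : Coker X) :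
    FobQ F X ρ c.out = ρ (1, c) := by
  rw [FobQ, QuotientGroup.out_eq']

variable [X.δ.range.Normal]

open scoped IsMulCommutative in
instance [Finite X₂] [IsAlgClosed F] [CharZero F] : Finite (KChar F X) :=
  finite_monoidHom_units

theorem FobP_coe [Fintype X.δ.ker] [Fintype (KChar F X)]
    (ρ : KChar F X × Coker X → (V →ₗ[F] V)) (k : X.δ.ker) :
    FobP F X ρ k =
      (Fintype.card X.δ.ker : F)⁻¹ • ∑ χ : KChar F X, (χ k : F) • ρ (χ, 1) := by
  rw [FobP, dif_pos k.2, finsum_eq_sum_of_fintype, Nat.card_eq_fintype_card]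

theorem FobP_of_not_mem_ker (ρ : KChar F X × Coker X → (V →ₗ[F] V)) {m : X₂}
    (hm : m ∉ X.δ.ker) : FobP F X ρ m = 0 :=
  dif_neg hm

theorem sum_inv_smul_FobP [CharZero F] [Fintype X.δ.ker] [Fintype (KChar F X)]
    (ρ : KChar F X × Coker X → (V →ₗ[F] V)) (χ : KChar F X) :
    ∑ k : X.δ.ker, (χ k : F)⁻¹ • FobP F X ρ k = ρ (χ, 1) := by
  simp only [FobP_coe, smul_comm _ (Fintype.card X.δ.ker : F)⁻¹, ← Finset.smul_sum,
    sum_char_inv_smul_sum_char_apply_smul]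
  exact inv_smul_smul₀ (Nat.cast_ne_zero.mpr Fintype.card_ne_zero) _

theorem IsGRep.apply_eq_comp {ρ : KChar F X × Coker X → (V →ₗ[F] V)} (hρ : IsGRep F X ρ)
    (χ : KChar F X) (c : Coker X) : ρ (χ, c) = ρ (1, c) ∘ₗ ρ (χ, 1) := by
  have hχ : dualActQ F X 1 1 * χ = χ := MonoidHom.ext fun k => one_mul (χ k)
  have h := hρ.2 1 χ c 1
  rwa [hχ, mul_one] at h

theorem intertwines_iff_FobP_FobQ [CharZero F] [Fintype X.δ.ker] [Fintype (KChar F X)]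
    {ρ : KChar F X × Coker X → (V →ₗ[F] V)}
    {ρ' : KChar F X × Coker X → (V' →ₗ[F] V')}
    (hρ : IsGRep F X ρ) (hρ' : IsGRep F X ρ') (f : V →ₗ[F] V') :
    (∀ p, f ∘ₗ ρ p = ρ' p ∘ₗ f) ↔
      (∀ m, f ∘ₗ FobP F X ρ m = FobP F X ρ' m ∘ₗ f) ∧
        (∀ g, f ∘ₗ FobQ F X ρ g = FobQ F X ρ' g ∘ₗ f) := by
  constructor
  · intro h
    refine ⟨fun m => ?_, fun g => h _⟩
    by_cases hm : m ∈ X.δ.ker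
    · lift m to X.δ.ker using hm
      rw [FobP_coe, FobP_coe, LinearMap.comp_smul, LinearMap.smul_comp,
        comp_sum_smul_eq_sum_smul_comp _ _ fun χ => h (χ, 1)]
    · rw [FobP_of_not_mem_ker ρ hm, FobP_of_not_mem_ker ρ' hm, LinearMap.comp_zero,
        LinearMap.zero_comp]
  · rintro ⟨hP, hQ⟩ ⟨χ, c⟩
    have hchar : f ∘ₗ ρ (χ, 1) = ρ' (χ, 1) ∘ₗ f := by
      rw [← sum_inv_smul_FobP ρ, ← sum_inv_smul_FobP ρ']
      exact comp_sum_smul_eq_sum_smul_comp _ _ fun k => hP k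
    have hcoker : f ∘ₗ ρ (1, c) = ρ' (1, c) ∘ₗ f := by
      rw [← FobQ_out ρ, ← FobQ_out ρ', hQ]
    rw [hρ.apply_eq_comp, hρ'.apply_eq_comp, ← LinearMap.comp_assoc, hcoker,
      LinearMap.comp_assoc, hchar, LinearMap.comp_assoc]

end Functor

section Braiding

variable {F : Type} [Field F] {X₁ X₂ : Type} [Group X₁] [Group X₂] [Fintype X₂]
  {X : CrossedModule X₁ X₂} {V W : Type} [AddCommGroup V] [Module F V]
  [AddCommGroup W] [Module F W]

theorem braidAux_tmul (PA : X₂ → V →ₗ[F] V) (QB : X₁ → W →ₗ[F] W) (v : V) (w : W) :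
    braidAux X PA QB (v ⊗ₜ w) = ∑ m, QB (X.δ m) w ⊗ₜ PA m v := by
  simp [braidAux]

end Braiding

namespace XRep

variable {F : Type} [Field F] {X₁ X₂ : Type} [Group X₁] [Group X₂] [Fintype X₂]
  [DecidableEq X₂] {X : CrossedModule X₁ X₂} {W : Type} [AddCommGroup W] [Module F W]

theorem P_apply_P (B : XRep F X W) (m n : X₂) (w : W) :
    B.P m (B.P n w) = if m = n then B.P m w else 0 := by
  rw [← LinearMap.comp_apply, B.P_orth]
  split_ifs <;> rfl

theorem sum_P_apply (B : XRep F X W) (w : W) : ∑ m, B.P m w = w := by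
  simpa using LinearMap.congr_fun B.P_total w

variable (F X)

noncomputable def regular : XRep F X (X₁ → F) where
  P m := if m = 1 then LinearMap.id else 0
  Q g := LinearMap.funLeft F F (· * g)
  P_orth m n := by by_cases hm : m = 1 <;> by_cases hn : n = 1 <;> simp [hm, hn, eq_comm]
  P_total := by simp
  Q_one := by ext; simp
  Q_mul g h := by ext; simp [mul_assoc]
  PQ_compat m g := by by_cases hm : m = 1 <;> simp [hm, X.one_act, X.act_eq_one_iff]

noncomputable def tautological : XRep F X (X₂ → F) where
  P m :=
    { toFun f x := if x = m then f x else 0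
      map_add' f g := by ext x; by_cases hx : x = m <;> simp [hx]
      map_smul' c f := by ext x; by_cases hx : x = m <;> simp [hx] }
  Q g := LinearMap.funLeft F F (X.act · g)
  P_orth m n := by
    by_cases hmn : m = n
    · subst hmn
      ext f x
      by_cases hx : x = m <;> simp [hx]
    · ext f x
      by_cases hx : x = n <;> simp [hx, hmn, Ne.symm hmn]
  P_total := by ext; simp
  Q_one := by ext; simp [X.act_one]
  Q_mul g h := by ext; simp [X.act_mul]
  PQ_compat m g := by ext; simp [(X.act_injective g).eq_iff]

variable {F X}

theorem Transparent.P_eq_zero {B : XRep F X W} (hB : B.Transparent) {m₀ : X₂}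
    (hm₀ : X.δ m₀ ≠ 1) : B.P m₀ = 0 := by
  classical
  ext w
  set v : X₁ → F := Pi.single 1 1
  have hbraid : braidAux X (regular F X).P B.Q (v ⊗ₜ w) = w ⊗ₜ v := by
    rw [braidAux_tmul, Fintype.sum_eq_single 1 fun m hm => by simp [regular, hm]]
    simp [regular, B.Q_one]
  have hdouble : ∑ m, (regular F X).Q (X.δ m) v ⊗ₜ[F] B.P m w = v ⊗ₜ w := by
    simpa [hbraid, braidAux_tmul] using LinearMap.congr_fun (hB _ _ _ (regular F X)).1 (v ⊗ₜ w)
  have hcomponent := congrArg (B.P m₀ ∘ₗ (TensorProduct.lid F W).toLinearMap ∘ₗ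
    (LinearMap.proj (R := F) (φ := fun _ : X₁ => F) (X.δ m₀)⁻¹).rTensor W) hdouble
  simp only [regular, map_sum, LinearMap.coe_comp, LinearEquiv.coe_coe, Function.comp_apply,
    LinearMap.rTensor_tmul, LinearMap.coe_proj, Function.eval, LinearMap.funLeft_apply,
    Pi.single_apply, inv_mul_eq_one, lid_tmul, ite_smul, one_smul, zero_smul, apply_ite, P_apply_P,
    map_zero, inv_eq_one, hm₀, v]
    at hcomponent
  rwa [Fintype.sum_eq_single m₀ fun m hm => by simp [Ne.symm hm], if_pos rfl, if_pos rfl]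
    at hcomponent

theorem Transparent.Q_δ_eq_id {B : XRep F X W} (hB : B.Transparent) (n₀ : X₂) :
    B.Q (X.δ n₀) = LinearMap.id := by
  classical
  ext w
  set v : X₂ → F := Pi.single n₀ 1
  have hinner : braidAux X B.P (tautological F X).Q (w ⊗ₜ v) = v ⊗ₜ w := by
    rw [braidAux_tmul]
    calc ∑ m, (tautological F X).Q (X.δ m) v ⊗ₜ[F] B.P m w
        = ∑ m, v ⊗ₜ[F] B.P m w := Finset.sum_congr rfl fun m _ => by
          by_cases hm : X.δ m = 1
          · rw [hm, Q_one, LinearMap.id_apply]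
          · rw [hB.P_eq_zero hm, LinearMap.zero_apply, tmul_zero, tmul_zero]
      _ = v ⊗ₜ w := by rw [← tmul_sum, sum_P_apply]
  have hv : ∀ m, (tautological F X).P m v = if m = n₀ then v else 0 := by
    intro m
    ext x
    by_cases hx : x = m <;> by_cases hm : m = n₀ <;>
      simp [tautological, v, Pi.single_apply, hx, hm]
  have hdouble : B.Q (X.δ n₀) w ⊗ₜ[F] v = w ⊗ₜ v := by
    have := LinearMap.congr_fun (hB _ _ _ (tautological F X)).2 (w ⊗ₜ v)
    rwa [LinearMap.comp_apply, hinner, braidAux_tmul,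
      Fintype.sum_eq_single n₀ fun m hm => by rw [hv, if_neg hm, tmul_zero], hv, if_pos rfl]
      at this
  simpa [v] using congrArg ((TensorProduct.rid F W).toLinearMap ∘ₗ
    (LinearMap.proj (R := F) (φ := fun _ : X₂ => F) n₀).lTensor W) hdouble

theorem Transparent.Q_out_mk {B : XRep F X W} (hB : B.Transparent) (g : X₁) :
    B.Q (QuotientGroup.mk g : Coker X).out = B.Q g := by
  obtain ⟨⟨_, n, rfl⟩, hout⟩ := QuotientGroup.mk_out_eq_mul X.δ.range g
  rw [hout, B.Q_mul, hB.Q_δ_eq_id, LinearMap.comp_id]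

theorem Transparent.sum_P_ker [Fintype X.δ.ker] {B : XRep F X W} (hB : B.Transparent) :
    ∑ k : X.δ.ker, B.P k = LinearMap.id := by
  classical
  rw [← Finset.sum_subtype (Finset.univ.filter (· ∈ X.δ.ker)) (by simp) B.P,
    Finset.sum_filter_of_ne fun m _ hm => ?_, B.P_total]
  by_contra hker
  exact hm (hB.P_eq_zero hker)

section CharacterAction

variable [Fintype X.δ.ker] (B : XRep F X W)

noncomputable def charAct (χ : KChar F X) : W →ₗ[F] W :=
  ∑ k : X.δ.ker, (χ k : F)⁻¹ • B.P k

theorem charAct_mul (χ χ' : KChar F X) :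
    B.charAct (χ * χ') = B.charAct χ ∘ₗ B.charAct χ' := by
  ext w
  simp [charAct, P_apply_P, smul_smul, mul_comm]

theorem charAct_comp_Q_out (χ : KChar F X) (c : Coker X) :
    B.charAct χ ∘ₗ B.Q c.out = B.Q c.out ∘ₗ B.charAct (dualActQ F X c χ) := by
  simp only [charAct, ← Module.End.mul_eq_comp, Finset.sum_mul, Finset.mul_sum, smul_mul_assoc,
    mul_smul_comm]
  simp only [Module.End.mul_eq_comp, B.PQ_compat]
  exact Fintype.sum_bijective (X.kerAct · c.out) (X.kerAct_bijective c.out) _ _ fun k => by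
    simp only [dualActQ, MonoidHom.coe_mk, OneHom.coe_mk, CrossedModule.kerAct_kerAct,
      mul_inv_cancel, CrossedModule.kerAct_one_right]
    rfl

noncomputable def gRep : KChar F X × Coker X → (W →ₗ[F] W) :=
  fun p => B.Q p.2.out ∘ₗ B.charAct p.1

variable {B}

theorem Transparent.gRep_char [X.δ.range.Normal] (hB : B.Transparent) (χ : KChar F X) :
    B.gRep (χ, 1) = B.charAct χ := by
  rw [gRep, ← QuotientGroup.mk_one, hB.Q_out_mk, B.Q_one, LinearMap.id_comp]

theorem Transparent.gRep_coker (hB : B.Transparent) (c : Coker X) :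
    B.gRep (1, c) = B.Q c.out := by
  simp [gRep, charAct, hB.sum_P_ker]

theorem Transparent.FobQ_gRep (hB : B.Transparent) : FobQ F X B.gRep = B.Q := by
  funext g
  rw [FobQ, hB.gRep_coker, hB.Q_out_mk]

theorem Transparent.isGRep_gRep [X.δ.range.Normal] (hB : B.Transparent) : IsGRep F X B.gRep := by
  refine ⟨by rw [hB.gRep_coker, ← QuotientGroup.mk_one, hB.Q_out_mk, B.Q_one],
    fun χ χ' c c' => ?_⟩
  have hmul : c * c' = QuotientGroup.mk (c.out * c'.out) := by
    rw [QuotientGroup.mk_mul, QuotientGroup.out_eq', QuotientGroup.out_eq']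
  simp only [gRep]
  rw [hmul, hB.Q_out_mk, B.Q_mul, charAct_mul]
  simp only [LinearMap.comp_assoc]
  rw [← LinearMap.comp_assoc (B.charAct χ') (B.Q c'.out) (B.charAct χ), charAct_comp_Q_out,
    LinearMap.comp_assoc]

open scoped IsMulCommutative in
theorem Transparent.FobP_gRep [X.δ.range.Normal] [IsAlgClosed F] [CharZero F]
    [Fintype (KChar F X)] (hB : B.Transparent) : FobP F X B.gRep = B.P := by
  funext m
  by_cases hm : m ∈ X.δ.ker
  · lift m to X.δ.ker using hm
    simp only [FobP_coe, hB.gRep_char, charAct, sum_char_apply_smul_sum_char_inv_smul]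
    exact inv_smul_smul₀ (Nat.cast_ne_zero.mpr Fintype.card_ne_zero) _
  · rw [FobP_of_not_mem_ker _ hm, hB.P_eq_zero hm]

end CharacterAction

end XRep

theorem functor_F_equivalence_onto_transparent_general
    {F : Type} [Field F] [IsAlgClosed F] [CharZero F]
    {X₁ X₂ : Type} [Group X₁] [Group X₂] [Fintype X₂] [DecidableEq X₂]
    (X : CrossedModule X₁ X₂) [X.δ.range.Normal] :
    -- essential surjectivity onto (in particular simple) transparent objects
    (∀ (W : Type) (_ : AddCommGroup W) (_ : Module F W) (_ : FiniteDimensional F W)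
      (B : XRep F X W), B.Transparent →
      ∃ ρ : KChar F X × Coker X → (W →ₗ[F] W),
        IsGRep F X ρ ∧ FobP F X ρ = B.P ∧ FobQ F X ρ = B.Q) ∧
    -- full faithfulness of `F`
    (∀ (V V' : Type) (_ : AddCommGroup V) (_ : Module F V) (_ : FiniteDimensional F V)
      (_ : AddCommGroup V') (_ : Module F V') (_ : FiniteDimensional F V')
      (ρ : KChar F X × Coker X → (V →ₗ[F] V)) (_ : IsGRep F X ρ)
      (ρ' : KChar F X × Coker X → (V' →ₗ[F] V')) (_ : IsGRep F X ρ')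
      (f : V →ₗ[F] V'),
      (∀ p : KChar F X × Coker X, f ∘ₗ ρ p = ρ' p ∘ₗ f) ↔
        ((∀ m : X₂, f ∘ₗ FobP F X ρ m = FobP F X ρ' m ∘ₗ f) ∧
         (∀ g : X₁, f ∘ₗ FobQ F X ρ g = FobQ F X ρ' g ∘ₗ f))) := by
  classical
  have : Fintype (KChar F X) := Fintype.ofFinite _
  exact ⟨fun _ _ _ _ B hB => ⟨B.gRep, hB.isGRep_gRep, hB.FobP_gRep, hB.FobQ_gRep⟩,
    fun _ _ _ _ _ _ _ _ _ hρ _ hρ' f => intertwines_iff_FobP_FobQ hρ hρ' f⟩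

/-- Every simple transparent object of `M(X)` lies in the (strict) essential image
of the functor `F : G(X)-Rep → M(X)` — indeed every transparent object does — and
`F` is fully faithful; consequently `F` is an equivalence between `G(X)-Rep` and
the full subcategory of transparent objects of `M(X)`. -/
theorem functor_F_equivalence_onto_transparent
    {F : Type} [Field F] [IsAlgClosed F] [CharZero F]
    {X₁ X₂ : Type} [Group X₁] [Group X₂] [Fintype X₁] [Fintype X₂] [DecidableEq X₂]
    (X : CrossedModule X₁ X₂) [X.δ.range.Normal] :
    -- essential surjectivity onto (in particular simple) transparent objects
    (∀ (W : Type) (_ : AddCommGroup W) (_ : Module F W) (_ : FiniteDimensional F W)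
      (B : XRep F X W), B.Transparent →
      ∃ ρ : KChar F X × Coker X → (W →ₗ[F] W),
        IsGRep F X ρ ∧ FobP F X ρ = B.P ∧ FobQ F X ρ = B.Q) ∧
    -- full faithfulness of `F`
    (∀ (V V' : Type) (_ : AddCommGroup V) (_ : Module F V) (_ : FiniteDimensional F V)
      (_ : AddCommGroup V') (_ : Module F V') (_ : FiniteDimensional F V')
      (ρ : KChar F X × Coker X → (V →ₗ[F] V)) (_ : IsGRep F X ρ)
      (ρ' : KChar F X × Coker X → (V' →ₗ[F] V')) (_ : IsGRep F X ρ')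
      (f : V →ₗ[F] V'),
      (∀ p : KChar F X × Coker X, f ∘ₗ ρ p = ρ' p ∘ₗ f) ↔
        ((∀ m : X₂, f ∘ₗ FobP F X ρ m = FobP F X ρ' m ∘ₗ f) ∧
         (∀ g : X₁, f ∘ₗ FobQ F X ρ g = FobQ F X ρ' g ∘ₗ f))) :=
  functor_F_equivalence_onto_transparent_general X
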